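/- Necessity of moments: in a monotone-separable network satisfying (IA) and (AA), for any α > 1: if E[Z_{(−∞,0]}^{α−1}] < ∞, then E[Z_0^{α}] < ∞. -/

import Mathlib

/-!
Put `V_n = Z_{-n}` and `U_n = T_0 - T_{-n}`. Comparing `N` on `[-n, 0]` with the degenerate
process moved to time `T_{-n}` and using (AA) gives `V_n ≤ r (Z_{[-n,0]}(N) + U_n)`. So if
`V_n > t` and `U_n ≤ 2an` (an event of probability at least `1/2`, by Markov) for some
`n ≤ t / (4ar)`, then `2r Z_{(-∞,0]} > t`. The events `{V_n > t}` are pairwise independent and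
independent of `U_n`, so a second-moment (Bonferroni) bound turns these `≈ t / (4ar)` chances
into `t P(Z_0 > t) ≤ C P(2r Z_{(-∞,0]} > t)` for large `t`; the smallness this needs comes from
`t P(Z_0 > t) → 0`. Integrating against `t^{α-2}` bounds `E Z_0^α` by `E Z_{(-∞,0]}^{α-1}`.
-/

open MeasureTheory Filter Set

/-- A monotone-separable network: `X m n T ζ` is the time of last activity for the
`[m,n]` restriction of the arrival process `T` with marks `ζ`.  `X m n` only depends on
the coordinates `T l, ζ l` for `m ≤ l ≤ n`, and satisfies causality, external
monotonicity, homogeneity and separability. -/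
structure MonSepNet (K : Type*) where
  X : ℤ → ℤ → (ℤ → ℝ) → (ℤ → K) → ℝ
  localDep : ∀ (m n : ℤ) (T T' : ℤ → ℝ) (ζ ζ' : ℤ → K),
      (∀ l, m ≤ l → l ≤ n → T l = T' l) → (∀ l, m ≤ l → l ≤ n → ζ l = ζ' l) →
      X m n T ζ = X m n T' ζ'
  causality : ∀ (m n : ℤ) (T : ℤ → ℝ) (ζ : ℤ → K), m ≤ n → Monotone T →
      T n ≤ X m n T ζ
  extMono : ∀ (m n : ℤ) (T T' : ℤ → ℝ) (ζ : ℤ → K), m ≤ n → Monotone T → Monotone T' →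
      (∀ l, T l ≤ T' l) → X m n T ζ ≤ X m n T' ζ
  homogeneity : ∀ (m n : ℤ) (T : ℤ → ℝ) (ζ : ℤ → K) (c : ℝ), m ≤ n → Monotone T →
      X m n (fun l => T l + c) ζ = X m n T ζ + c
  separability : ∀ (m l n : ℤ) (T : ℤ → ℝ) (ζ : ℤ → K), m ≤ l → l < n → Monotone T →
      X m l T ζ ≤ T (l + 1) → X m n T ζ = X (l + 1) n T ζ

/-- The `[m,n]` maximal dater `Z_{[m,n]}(N) = X_{[m,n]}(N) - T_n`. -/
noncomputable def MonSepNet.Z {K : Type*} (net : MonSepNet K)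
    (m n : ℤ) (T : ℤ → ℝ) (ζ : ℤ → K) : ℝ :=
  net.X m n T ζ - T n

open ProbabilityTheory

open scoped ENNReal Topology

namespace MonSepNet

variable {K : Type*} (net : MonSepNet K) {m n : ℤ} {T : ℤ → ℝ} (ζ : ℤ → K)

theorem Z_nonneg (hmn : m ≤ n) (hT : Monotone T) : 0 ≤ net.Z m n T ζ :=
  sub_nonneg.2 (net.causality m n T ζ hmn hT)

theorem Z_zero_le_Z_add (hmn : m ≤ n) (hT : Monotone T) :
    net.Z m n (fun _ => 0) ζ ≤ net.Z m n T ζ + (T n - T m) := by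
  -- `extMono` needs domination at every index; `min (T l) (T m)` is below `T` and equals `T m`
  -- on `[m, n]`.
  have hmin : Monotone fun l => min (T l) (T m) := fun i j hij => min_le_min_right _ (hT hij)
  have hfrozen : net.X m n (fun l => min (T l) (T m)) ζ = net.X m n (fun _ => 0) ζ + T m := by
    rw [← net.homogeneity m n _ ζ _ hmn monotone_const]
    exact net.localDep m n _ _ ζ ζ (fun l hl _ => by simp [min_eq_right (hT hl)])
      fun _ _ _ => rfl
  have := net.extMono m n _ T ζ hmn hmin hT fun l => min_le_left _ _
  simp only [Z]
  linarith

theorem sum_le_card_mul_Z_add {ι : Type*} [Fintype ι] {Y : ℤ → ι → ℝ} (hY : ∀ i j, 0 ≤ Y i j)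
    (hmn : m ≤ n) (hT : Monotone T)
    (hQ : ∀ j, ∑ i ∈ Finset.Icc m n, Y i j ≤ net.Z m n (fun _ => 0) ζ) {i : ℤ}
    (hi : i ∈ Finset.Icc m n) :
    ∑ j, Y i j ≤ Fintype.card ι * (net.Z m n T ζ + (T n - T m)) :=
  calc ∑ j, Y i j ≤ ∑ j, ∑ k ∈ Finset.Icc m n, Y k j :=
        Finset.sum_le_sum fun j _ => Finset.single_le_sum (fun k _ => hY k j) hi
    _ ≤ ∑ _j : ι, (net.Z m n T ζ + (T n - T m)) :=
        Finset.sum_le_sum fun j _ => (hQ j).trans (net.Z_zero_le_Z_add ζ hmn hT)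
    _ = Fintype.card ι * (net.Z m n T ζ + (T n - T m)) := by
        rw [Finset.sum_const, Finset.card_univ, nsmul_eq_mul]

theorem ofReal_lt_mul_iSup_Z_of_lt_sum {r : ℕ} {Y : ℤ → Fin r → ℝ} (hY : ∀ i j, 0 ≤ Y i j)
    (hT : Monotone T) {a t : ℝ} (ha : 0 < a) {k : ℕ}
    (hQ : ∀ j, ∑ i ∈ Finset.Icc (-k : ℤ) 0, Y i j ≤ net.Z (-k) 0 (fun _ => 0) ζ)
    (hnt : 4 * a * r * k ≤ t) (ht : t < ∑ j, Y (-k) j) (hTn : T 0 - T (-k) ≤ 2 * a * k) :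
    ENNReal.ofReal t < ENNReal.ofReal (2 * r) * ⨆ l : ℕ, ENNReal.ofReal (net.Z (-l) 0 T ζ) := by
  have hsum := net.sum_le_card_mul_Z_add ζ hY (by omega) hT hQ (Finset.left_mem_Icc.2 (by omega))
  rw [Fintype.card_fin] at hsum
  have ht0 : 0 ≤ t := le_trans (by positivity) hnt
  have hZ : t < 2 * r * net.Z (-k) 0 T ζ := by nlinarith
  calc ENNReal.ofReal t < ENNReal.ofReal (2 * r * net.Z (-k) 0 T ζ) :=
        (ENNReal.ofReal_lt_ofReal_iff (ht0.trans_lt hZ)).2 hZ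
    _ ≤ ENNReal.ofReal (2 * r) * ⨆ l : ℕ, ENNReal.ofReal (net.Z (-l) 0 T ζ) := by
        rw [ENNReal.ofReal_mul (by positivity)]
        gcongr
        exact le_iSup (fun l : ℕ => ENNReal.ofReal (net.Z (-l) 0 T ζ)) k

end MonSepNet

theorem sub_eq_sum_range_of_add_one_eq {T τ : ℤ → ℝ} (hT : ∀ n, T (n + 1) = T n + τ n)
    (m : ℤ) (k : ℕ) : T (m + k) - T m = ∑ i ∈ Finset.range k, τ (m + i) := by
  induction k with
  | zero => simp
  | succ k ih =>
    rw [Finset.sum_range_succ, ← ih, Nat.cast_succ, ← add_assoc, hT]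
    ring

section Probability

variable {Ω : Type*} [MeasurableSpace Ω] {μ : Measure Ω}

theorem sum_measure_le_measure_biUnion_add_sum_inter {ι : Type*} [DecidableEq ι]
    {D : ι → Set Ω} (hD : ∀ i, MeasurableSet (D i)) (s : Finset ι) :
    ∑ i ∈ s, μ (D i) ≤ μ (⋃ i ∈ s, D i) + ∑ i ∈ s, ∑ j ∈ s.erase i, μ (D i ∩ D j) := by
  induction s using Finset.induction with
  | empty => simp
  | insert k s hk ih =>
    have hU : MeasurableSet (⋃ i ∈ s, D i) := s.measurableSet_biUnion fun i _ => hD i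
    have hcap : μ (D k ∩ ⋃ i ∈ s, D i) ≤ ∑ j ∈ s, μ (D k ∩ D j) := by
      rw [inter_iUnion₂]
      exact measure_biUnion_finset_le s _
    have hpairs : ∑ j ∈ s, μ (D k ∩ D j) + ∑ i ∈ s, ∑ j ∈ s.erase i, μ (D i ∩ D j) ≤
        ∑ i ∈ insert k s, ∑ j ∈ (insert k s).erase i, μ (D i ∩ D j) := by
      rw [Finset.sum_insert hk, Finset.erase_insert hk]
      exact add_le_add le_rfl (Finset.sum_le_sum fun i _ => Finset.sum_le_sum_of_subset
        (Finset.erase_subset_erase i (Finset.subset_insert k s)))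
    calc ∑ i ∈ insert k s, μ (D i)
        ≤ μ (D k) + μ (⋃ i ∈ s, D i) + ∑ i ∈ s, ∑ j ∈ s.erase i, μ (D i ∩ D j) := by
          rw [Finset.sum_insert hk, add_assoc]
          gcongr
      _ = μ (D k ∪ ⋃ i ∈ s, D i) + μ (D k ∩ ⋃ i ∈ s, D i)
            + ∑ i ∈ s, ∑ j ∈ s.erase i, μ (D i ∩ D j) := by
          rw [measure_union_add_inter _ hU]
      _ ≤ μ (⋃ i ∈ insert k s, D i) + ∑ i ∈ insert k s, ∑ j ∈ (insert k s).erase i,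
            μ (D i ∩ D j) := by
          rw [Finset.set_biUnion_insert, add_assoc]
          gcongr
          exact (add_le_add hcap le_rfl).trans hpairs

open Finset in
theorem card_mul_le_four_mul_measure {ι : Type*} (s : Finset ι) {A B : ι → Set Ω}
    (hA : ∀ i, MeasurableSet (A i)) (hB : ∀ i, MeasurableSet (B i)) {p : ℝ≥0∞}
    (hAp : ∀ i ∈ s, μ (A i) = p)
    (hAA : ∀ i ∈ s, ∀ j ∈ s, i ≠ j → μ (A i ∩ A j) = μ (A i) * μ (A j))
    (hAB : ∀ i ∈ s, μ (A i ∩ B i) = μ (A i) * μ (B i)) (hBhalf : ∀ i ∈ s, 2⁻¹ ≤ μ (B i))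
    (hsmall : #s * p ≤ 4⁻¹) {E : Set Ω}
    (hE : ∀ᵐ ω ∂μ, ∀ i ∈ s, ω ∈ A i → ω ∈ B i → ω ∈ E) :
    #s * p ≤ 4 * μ E := by
  classical
  set P := (#s : ℝ≥0∞) * p
  have hD : ∀ i ∈ s, p ≤ 2 * μ (A i ∩ B i) := fun i hi => by
    rw [hAB i hi, hAp i hi, mul_left_comm]
    calc p = p * (2 * 2⁻¹) := by
          rw [ENNReal.mul_inv_cancel two_ne_zero ENNReal.ofNat_ne_top, mul_one]
      _ ≤ p * (2 * μ (B i)) := by gcongr; exact hBhalf i hi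
  have hpairs : ∑ i ∈ s, ∑ j ∈ s.erase i, μ (A i ∩ B i ∩ (A j ∩ B j)) ≤ P * 4⁻¹ :=
    calc ∑ i ∈ s, ∑ j ∈ s.erase i, μ (A i ∩ B i ∩ (A j ∩ B j))
        ≤ ∑ i ∈ s, ∑ j ∈ s, p * p := by
          refine sum_le_sum fun i hi => (sum_le_sum fun j hj => ?_).trans
            (sum_le_sum_of_subset (erase_subset i s))
          calc μ (A i ∩ B i ∩ (A j ∩ B j)) ≤ μ (A i ∩ A j) :=
                measure_mono (inter_subset_inter inter_subset_left inter_subset_left)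
            _ = p * p := by
              rw [hAA i hi j (mem_of_mem_erase hj) (ne_of_mem_erase hj).symm, hAp i hi,
                hAp j (mem_of_mem_erase hj)]
      _ = P * P := by simp only [sum_const, nsmul_eq_mul, P]; ring
      _ ≤ P * 4⁻¹ := by gcongr
  have hunion : μ (⋃ i ∈ s, A i ∩ B i) ≤ μ E := by
    refine measure_mono_ae (hE.mono fun ω hω (hmem : ω ∈ ⋃ i ∈ s, A i ∩ B i) => ?_)
    obtain ⟨i, hi, hAi, hBi⟩ := mem_iUnion₂.1 hmem
    exact hω i hi hAi hBi
  have hP : P ≤ 2 * μ E + P / 2 :=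
    calc P = ∑ i ∈ s, p := by simp [P]
      _ ≤ 2 * ∑ i ∈ s, μ (A i ∩ B i) := by rw [mul_sum]; exact sum_le_sum hD
      _ ≤ 2 * (μ E + P * 4⁻¹) := by
        gcongr
        exact (sum_measure_le_measure_biUnion_add_sum_inter (fun i => (hA i).inter (hB i)) s).trans
          (add_le_add hunion hpairs)
      _ = 2 * μ E + P * (2 * 4⁻¹) := by ring
      _ = 2 * μ E + P / 2 := by
        rw [show (4 : ℝ≥0∞) = 2 * 2 by norm_num, ENNReal.mul_inv (by simp) (by simp),
          ← mul_assoc (2 : ℝ≥0∞), ENNReal.mul_inv_cancel two_ne_zero ENNReal.ofNat_ne_top,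
          one_mul, div_eq_mul_inv]
  have hPhalf : P / 2 ≤ 2 * μ E := by
    rw [← ENNReal.sub_half (hsmall.trans_lt (by norm_num)).ne]
    exact tsub_le_iff_right.2 hP
  calc P = 2 * (P / 2) := (ENNReal.mul_div_cancel two_ne_zero ENNReal.ofNat_ne_top).symm
    _ ≤ 2 * (2 * μ E) := by gcongr
    _ = 4 * μ E := by rw [← mul_assoc]; norm_num

theorem inv_two_le_measure_le_of_two_mul_integral_le [IsProbabilityMeasure μ] {f : Ω → ℝ}
    (hf : 0 ≤ᵐ[μ] f) (hfi : Integrable f μ) {c : ℝ} (hc : 0 < c) (h : 2 * ∫ ω, f ω ∂μ ≤ c) :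
    2⁻¹ ≤ μ {ω | f ω ≤ c} := by
  have hmarkov : μ {ω | c ≤ f ω} ≤ 2⁻¹ := by
    have := mul_meas_ge_le_integral_of_nonneg hf hfi c
    rw [← ofReal_measureReal, ← ENNReal.ofReal_ofNat 2, ← ENNReal.ofReal_inv_of_pos two_pos]
    exact ENNReal.ofReal_le_ofReal (by nlinarith)
  have hcompl : μ {ω | c ≤ f ω}ᶜ ≤ μ {ω | f ω ≤ c} :=
    measure_mono fun ω (hω : ¬ c ≤ f ω) => (not_le.1 hω).le
  refine le_trans ?_ hcompl
  rw [prob_compl_eq_one_sub₀ (nullMeasurableSet_le aemeasurable_const hfi.aemeasurable)]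
  calc (2⁻¹ : ℝ≥0∞) = 1 - 2⁻¹ := ENNReal.one_sub_inv_two.symm
    _ ≤ 1 - μ {ω | c ≤ f ω} := by gcongr

theorem inv_two_le_measure_sum_le [IsProbabilityMeasure μ] {ι : Type*} {X : ι → Ω → ℝ}
    (hX : ∀ i ω, 0 ≤ X i ω) (hXi : ∀ i, Integrable (X i) μ) {a : ℝ} (ha : 0 < a)
    (hmean : ∀ i, ∫ ω, X i ω ∂μ = a) {s : Finset ι} (hs : s.Nonempty) :
    2⁻¹ ≤ μ {ω | ∑ i ∈ s, X i ω ≤ 2 * a * s.card} :=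
  inv_two_le_measure_le_of_two_mul_integral_le
    (ae_of_all _ fun ω => Finset.sum_nonneg fun i _ => hX i ω)
    (integrable_finsetSum s fun i _ => hXi i) (by have := hs.card_pos; positivity)
    (by rw [integral_finsetSum s fun i _ => hXi i]; simp [hmean]; exact le_of_eq (by ring))

theorem tendsto_ofReal_mul_measure_lt [IsFiniteMeasure μ] {f : Ω → ℝ} (hfm : Measurable f)
    (hfi : Integrable f μ) :
    Tendsto (fun t => ENNReal.ofReal t * μ {ω | t < f ω}) atTop (𝓝 0) := by
  have hsets : Tendsto (fun t => μ {ω | t < f ω}) atTop (𝓝 0) := by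
    have := tendsto_measure_iInter_atTop (μ := μ) (s := fun t : ℝ => {ω | t < f ω})
      (fun t => (measurableSet_lt measurable_const hfm).nullMeasurableSet)
      (fun t t' h ω (hω : t' < f ω) => h.trans_lt hω) ⟨0, measure_ne_top μ _⟩
    rwa [show (⋂ t : ℝ, {ω | t < f ω}) = ∅ from
      iInter_eq_empty_iff.2 fun ω => ⟨f ω, lt_irrefl (f ω)⟩, measure_empty] at this
  refine tendsto_of_tendsto_of_tendsto_of_le_of_le tendsto_const_nhds
    (tendsto_setLIntegral_zero hfi.lintegral_lt_top.ne hsets) (fun t => zero_le) fun t => ?_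
  calc ENNReal.ofReal t * μ {ω | t < f ω} = ∫⁻ _ in {ω | t < f ω}, ENNReal.ofReal t ∂μ := by
        rw [setLIntegral_const, mul_comm]
    _ ≤ ∫⁻ ω in {ω | t < f ω}, ENNReal.ofReal (f ω) ∂μ :=
        setLIntegral_mono' (measurableSet_lt measurable_const hfm) fun ω hω =>
          ENNReal.ofReal_le_ofReal (le_of_lt hω)

theorem exists_ofReal_mul_measure_lt_le [IsFiniteMeasure μ] {V U : ℕ → Ω → ℝ} {u : ℕ → ℝ}
    {E : ℝ → Set Ω} {d : ℝ} (hd : 0 < d) (hVm : ∀ n, Measurable (V n))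
    (hUm : ∀ n, Measurable (U n)) (hV0 : Integrable (V 0) μ)
    (hident : ∀ n t, μ {ω | t < V n ω} = μ {ω | t < V 0 ω})
    (hVV : Pairwise fun m n => IndepFun (V m) (V n) μ) (hVU : ∀ n, IndepFun (V n) (U n) μ)
    (hU : ∀ n, 1 ≤ n → 2⁻¹ ≤ μ {ω | U n ω ≤ u n})
    (hE : ∀ᵐ ω ∂μ, ∀ (n : ℕ) (t : ℝ), d * n ≤ t → t < V n ω → U n ω ≤ u n → ω ∈ E t) :
    ∃ t₁, 0 ≤ t₁ ∧ ∀ t, t₁ ≤ t →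
      ENNReal.ofReal t * μ {ω | t < V 0 ω} ≤ ENNReal.ofReal (8 * d) * μ (E t) := by
  have hsmall : ∀ᶠ t in atTop, ENNReal.ofReal (t / d) * μ {ω | t < V 0 ω} < 4⁻¹ := by
    have := ENNReal.Tendsto.const_mul (tendsto_ofReal_mul_measure_lt (hVm 0) hV0)
      (Or.inr (ENNReal.ofReal_ne_top (r := d⁻¹)))
    rw [mul_zero] at this
    filter_upwards [(tendsto_order.1 this).2 4⁻¹ (by norm_num)] with t ht
    rwa [div_eq_inv_mul, ENNReal.ofReal_mul (inv_nonneg.2 hd.le), mul_assoc]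
  obtain ⟨t₁, ht₁⟩ := eventually_atTop.1 hsmall
  refine ⟨max t₁ (2 * d), by positivity, fun t ht => ?_⟩
  have htd : 2 ≤ t / d := (le_div_iff₀ hd).2 (le_of_max_le_right ht)
  set K := ⌊t / d⌋₊
  have hKt : (K : ℝ) ≤ t / d := Nat.floor_le (by linarith)
  have hK1 : 1 ≤ K := Nat.le_floor (by norm_num; linarith)
  have hmain : (K : ℝ≥0∞) * μ {ω | t < V 0 ω} ≤ 4 * μ (E t) := by
    rw [← Nat.add_sub_cancel K 1, ← Nat.card_Icc]
    refine card_mul_le_four_mul_measure (Finset.Icc 1 K) (A := fun n => {ω | t < V n ω})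
      (B := fun n => {ω | U n ω ≤ u n}) (fun n => measurableSet_lt measurable_const (hVm n))
      (fun n => measurableSet_le (hUm n) measurable_const) (fun n _ => hident n t)
      (fun m _ n _ hmn => (hVV hmn).measure_inter_preimage_eq_mul (Ioi t) (Ioi t)
        measurableSet_Ioi measurableSet_Ioi)
      (fun n _ => (hVU n).measure_inter_preimage_eq_mul _ _ measurableSet_Ioi measurableSet_Iic)
      (fun n hn => hU n (Finset.mem_Icc.1 hn).1) ?_ ?_
    · rw [Nat.card_Icc, Nat.add_sub_cancel, ← ENNReal.ofReal_natCast]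
      exact le_trans (by gcongr) (ht₁ t (le_of_max_le_left ht)).le
    · filter_upwards [hE] with ω hω n hn hA hB
      have hnK : (n : ℝ) ≤ K := by exact_mod_cast (Finset.mem_Icc.1 hn).2
      exact hω n t ((le_div_iff₀' hd).1 (hnK.trans hKt)) hA hB
  have htK : t ≤ 2 * d * K := by
    have := Nat.lt_floor_add_one (t / d)
    have hK1' : (1 : ℝ) ≤ K := by exact_mod_cast hK1
    rw [div_lt_iff₀ hd] at this
    nlinarith
  calc ENNReal.ofReal t * μ {ω | t < V 0 ω}
      ≤ ENNReal.ofReal (2 * d) * (K * μ {ω | t < V 0 ω}) := by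
        rw [← mul_assoc, ← ENNReal.ofReal_natCast, ← ENNReal.ofReal_mul (by positivity)]
        gcongr
    _ ≤ ENNReal.ofReal (2 * d) * (4 * μ (E t)) := by gcongr
    _ = ENNReal.ofReal (8 * d) * μ (E t) := by
        rw [← mul_assoc, ← ENNReal.ofReal_ofNat 4, ← ENNReal.ofReal_mul (by positivity)]
        ring_nf

theorem lintegral_const_mul_iSup_rpow_lt_top {M : ℕ → Ω → ℝ} (hM : ∀ n ω, 0 ≤ M n ω) {p : ℝ}
    (hp : 0 < p) (c : ℝ≥0∞) (hc : c ≠ ∞)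
    (h : ∫⁻ ω, ⨆ n, ENNReal.ofReal (M n ω ^ p) ∂μ < ∞) :
    ∫⁻ ω, (c * ⨆ n, ENNReal.ofReal (M n ω)) ^ p ∂μ < ∞ := by
  simp_rw [ENNReal.mul_rpow_of_nonneg _ _ hp.le]
  rw [lintegral_const_mul' _ _ (ENNReal.rpow_ne_top_of_nonneg hp.le hc)]
  refine ENNReal.mul_lt_top (ENNReal.rpow_lt_top_of_nonneg hp.le hc)
    (lt_of_le_of_lt (le_of_eq (lintegral_congr fun ω => ?_)) h)
  rw [show (⨆ n, ENNReal.ofReal (M n ω)) ^ p =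
    ENNReal.orderIsoRpow p hp (⨆ n, ENNReal.ofReal (M n ω)) from rfl, OrderIso.map_iSup]
  exact iSup_congr fun n => ENNReal.ofReal_rpow_of_nonneg (hM n ω) hp.le

theorem lintegral_Ioi_measure_lt_mul_rpow_lt_top {f : Ω → ℝ≥0∞} (hf : Measurable f) {p : ℝ}
    (hp : 0 < p) (h : ∫⁻ ω, f ω ^ p ∂μ < ∞) :
    ∫⁻ t in Ioi 0, μ {ω | ENNReal.ofReal t < f ω} * ENNReal.ofReal (t ^ (p - 1)) < ∞ := by
  have hfin : ∀ᵐ ω ∂μ, f ω ≠ ∞ := by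
    filter_upwards [ae_lt_top (hf.pow_const p) h.ne] with ω hω hω'
    simp [hω', ENNReal.top_rpow_of_pos hp] at hω
  have hreal : ∫⁻ ω, ENNReal.ofReal ((f ω).toReal ^ p) ∂μ < ∞ := by
    refine (lintegral_mono fun ω => ?_).trans_lt h
    rw [← ENNReal.ofReal_rpow_of_nonneg ENNReal.toReal_nonneg hp.le]
    exact ENNReal.rpow_le_rpow ENNReal.ofReal_toReal_le hp.le
  rw [lintegral_rpow_eq_lintegral_meas_lt_mul μ (ae_of_all _ fun ω => ENNReal.toReal_nonneg)
    hf.ennreal_toReal.aemeasurable hp] at hreal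
  refine (setLIntegral_congr_fun measurableSet_Ioi fun t ht => ?_).trans_lt
    (ENNReal.lt_top_of_mul_ne_top_right hreal.ne (by simpa using hp))
  congr 1
  exact measure_congr (hfin.mono fun ω hω => propext (ENNReal.ofReal_lt_iff_lt_toReal ht.le hω))

theorem lintegral_Ioi_mul_rpow_lt_top_of_tail_le {G H : ℝ → ℝ≥0∞} {p t₁ C : ℝ} (hp : 0 < p)
    (ht₁ : 0 ≤ t₁) (hG : ∀ t, G t ≤ 1)
    (hGH : ∀ t, t₁ ≤ t → ENNReal.ofReal t * G t ≤ ENNReal.ofReal C * H t)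
    (hH : ∫⁻ t in Ioi 0, H t * ENNReal.ofReal (t ^ (p - 1)) < ∞) :
    ∫⁻ t in Ioi 0, G t * ENNReal.ofReal (t ^ p) < ∞ := by
  rw [← Ioc_union_Ioi_eq_Ioi ht₁, lintegral_union measurableSet_Ioi (Ioc_disjoint_Ioi le_rfl)]
  refine ENNReal.add_lt_top.2 ⟨?_, ?_⟩
  · calc ∫⁻ t in Ioc 0 t₁, G t * ENNReal.ofReal (t ^ p)
        ≤ ∫⁻ _ in Ioc 0 t₁, ENNReal.ofReal (t₁ ^ p) :=
          setLIntegral_mono' measurableSet_Ioc fun t ht => by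
            rw [← one_mul (ENNReal.ofReal (t₁ ^ p))]
            exact mul_le_mul' (hG t)
              (ENNReal.ofReal_le_ofReal (Real.rpow_le_rpow ht.1.le ht.2 hp.le))
      _ < ∞ := by
          rw [setLIntegral_const, Real.volume_Ioc]
          exact ENNReal.mul_lt_top ENNReal.ofReal_lt_top ENNReal.ofReal_lt_top
  · calc ∫⁻ t in Ioi t₁, G t * ENNReal.ofReal (t ^ p)
        ≤ ∫⁻ t in Ioi t₁, ENNReal.ofReal C * (H t * ENNReal.ofReal (t ^ (p - 1))) :=
          setLIntegral_mono' measurableSet_Ioi fun t ht => by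
            have ht0 : 0 < t := ht₁.trans_lt ht
            rw [← mul_div_cancel₀ (t ^ p) ht0.ne', ← Real.rpow_sub_one ht0.ne',
              ENNReal.ofReal_mul ht0.le]
            convert mul_le_mul_right (hGH t ht.le) (ENNReal.ofReal (t ^ (p - 1))) using 1 <;> ring
      _ ≤ ENNReal.ofReal C * ∫⁻ t in Ioi 0, H t * ENNReal.ofReal (t ^ (p - 1)) := by
          rw [lintegral_const_mul' _ _ ENNReal.ofReal_ne_top]
          exact mul_le_mul_right (lintegral_mono_set (Ioi_subset_Ioi ht₁)) _
      _ < ∞ := ENNReal.mul_lt_top ENNReal.ofReal_lt_top hH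

theorem integrable_rpow_of_lintegral_Ioi_lt_top {f : Ω → ℝ} (hf : Measurable f) (hf0 : ∀ ω, 0 ≤ f ω)
    {p : ℝ} (hp : 0 < p)
    (h : ∫⁻ t in Ioi 0, μ {ω | t < f ω} * ENNReal.ofReal (t ^ (p - 1)) < ∞) :
    Integrable (fun ω => f ω ^ p) μ := by
  refine ⟨(hf.pow_const p).aestronglyMeasurable, ?_⟩
  rw [hasFiniteIntegral_iff_ofReal (ae_of_all _ fun ω => Real.rpow_nonneg (hf0 ω) p),
    lintegral_rpow_eq_lintegral_meas_lt_mul μ (ae_of_all _ hf0) hf.aemeasurable hp]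
  exact ENNReal.mul_lt_top ENNReal.ofReal_lt_top h

end Probability

theorem necessity_of_moments_general {K : Type*}
    {Ω : Type*} [MeasurableSpace Ω] {μ : Measure Ω} [IsProbabilityMeasure μ]
    (τ : ℤ → Ω → ℝ) (ζ : ℤ → Ω → K)
    (hτmeas : ∀ n, Measurable (τ n))
    (hτnonneg : ∀ n ω, 0 ≤ τ n ω)
    (hτident : ∀ n : ℤ, IdentDistrib (τ n) (τ 0) μ μ)
    (T : ℤ → Ω → ℝ)
    (hTrec : ∀ (n : ℤ) ω, T (n + 1) ω = T n ω + τ n ω)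
    (net : MonSepNet K)
    (hZmeas : ∀ m n : ℤ,
      Measurable fun ω => net.Z m n (fun l => T l ω) (fun l => ζ l ω))
    (a : ℝ) (ha : 0 < a)
    (hτint : Integrable (τ 0) μ) (hτmean : ∫ ω, τ 0 ω ∂μ = a)
    (hZ0int : Integrable (fun ω => net.Z 0 0 (fun l => T l ω) (fun l => ζ l ω)) μ)
    -- (AA): `Z_i = Y_i^{(1)} + ⋯ + Y_i^{(r)}` with i.i.d. nonnegative vectors
    -- independent of the interarrival times, and
    -- `Z_{[n,0]}(Q) ≥ max_j Σ_{i=n}^0 Y_i^{(j)}`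
    (r : ℕ) (hr : 1 ≤ r) (Y : ℤ → Fin r → Ω → ℝ)
    (hYmeas : ∀ i j, Measurable (Y i j))
    (hYnonneg : ∀ i j ω, 0 ≤ Y i j ω)
    (hZeq : ∀ (i : ℤ) ω, net.Z i i (fun l => T l ω) (fun l => ζ l ω) = ∑ j, Y i j ω)
    (hYiid : iIndepFun
      (fun i ω (j : Fin r) => Y i j ω) μ)
    (hYident : ∀ i : ℤ, IdentDistrib (fun ω (j : Fin r) => Y i j ω)
      (fun ω (j : Fin r) => Y 0 j ω) μ μ)
    (hYτindep : IndepFun (fun ω (i : ℤ) (j : Fin r) => Y i j ω)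
      (fun ω (i : ℤ) => τ i ω) μ)
    (hQlow : ∀ n : ℤ, n ≤ 0 → ∀ᵐ ω ∂μ, ∀ j : Fin r,
      (∑ i ∈ Finset.Icc n 0, Y i j ω) ≤ net.Z n 0 (fun _ => 0) (fun l => ζ l ω))
    (α : ℝ) (hα : 1 < α)
    -- `E[Z_{(-∞,0]}^{α-1}] < ∞`
    (hmom : (∫⁻ ω, ⨆ n : ℕ, ENNReal.ofReal
      (net.Z (-(n : ℤ)) 0 (fun l => T l ω) (fun l => ζ l ω) ^ (α - 1)) ∂μ) < ⊤) :
    Integrable (fun ω => net.Z 0 0 (fun l => T l ω) (fun l => ζ l ω) ^ α) μ := by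
  have hα1 : 0 < α - 1 := by linarith
  have hTmono : ∀ ω, Monotone fun l => T l ω := fun ω =>
    monotone_int_of_le_succ fun n => by rw [hTrec]; linarith [hτnonneg n ω]
  have hsum : Measurable fun y : Fin r → ℝ => ∑ j, y j :=
    Finset.measurable_sum _ fun j _ => measurable_pi_apply j
  set V : ℕ → Ω → ℝ := fun n ω => ∑ j, Y (-n) j ω
  set U : ℕ → Ω → ℝ := fun n ω => ∑ i ∈ Finset.range n, τ (-n + i) ω
  set S : Ω → ℝ≥0∞ := fun ω => ⨆ n : ℕ, ENNReal.ofReal (net.Z (-n) 0 (T · ω) (ζ · ω))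
  have hTU : ∀ (n : ℕ) ω, T 0 ω - T (-n) ω = U n ω := fun n ω => by
    simpa using sub_eq_sum_range_of_add_one_eq (T := (T · ω)) (τ := (τ · ω))
      (fun m => hTrec m ω) (-n) n
  have hZV : (fun ω => net.Z 0 0 (T · ω) (ζ · ω)) = V 0 := funext fun ω => by simp [V, hZeq]
  have hV : ∀ n, Measurable (V n) := fun n => Finset.measurable_sum _ fun j _ => hYmeas _ _
  have hU : ∀ n : ℕ, 1 ≤ n → 2⁻¹ ≤ μ {ω | U n ω ≤ 2 * a * n} := fun n hn => by
    simpa using inv_two_le_measure_sum_le (X := fun i : ℕ => τ (-n + i)) (s := Finset.range n)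
      (fun i => hτnonneg _) (fun i => (hτident _).integrable_iff.2 hτint) ha
      (fun i => (hτident _).integral_eq.trans hτmean) ⟨0, Finset.mem_range.2 hn⟩
  have hE : ∀ᵐ ω ∂μ, ∀ (n : ℕ) (t : ℝ), 4 * a * r * n ≤ t → t < V n ω → U n ω ≤ 2 * a * n →
      ENNReal.ofReal t < ENNReal.ofReal (2 * r) * S ω := by
    filter_upwards [ae_all_iff.2 fun n : ℕ => hQlow (-n) (by omega)] with ω hQ n t hnt htV hUn
    exact net.ofReal_lt_mul_iSup_Z_of_lt_sum (ζ · ω) (hYnonneg · · ω) (hTmono ω) ha (hQ n)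
      hnt htV ((hTU n ω).trans_le hUn)
  obtain ⟨t₁, ht₁, htail⟩ := exists_ofReal_mul_measure_lt_le
    (E := fun t => {ω | ENNReal.ofReal t < ENNReal.ofReal (2 * r) * S ω})
    (by positivity : 0 < 4 * a * r) hV
    (fun n => Finset.measurable_sum _ fun i _ => hτmeas _) (hZV ▸ hZ0int)
    (fun n t => ((hYident (-n)).comp hsum).measure_mem_eq measurableSet_Ioi)
    (fun m n hmn => (hYiid.indepFun (by omega)).comp hsum hsum)
    (fun n => hYτindep.comp (φ := fun y : ℤ → Fin r → ℝ => ∑ j, y (-n) j)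
      (ψ := fun g : ℤ → ℝ => ∑ i ∈ Finset.range n, g (-n + i)) (by fun_prop) (by fun_prop))
    hU hE
  have hS := lintegral_Ioi_measure_lt_mul_rpow_lt_top
    ((Measurable.iSup fun n => (hZmeas _ _).ennreal_ofReal).const_mul _) hα1
    (lintegral_const_mul_iSup_rpow_lt_top (M := fun n ω => net.Z (-n) 0 (T · ω) (ζ · ω))
      (fun n ω => net.Z_nonneg _ (by omega) (hTmono ω)) hα1 (ENNReal.ofReal (2 * r))
      ENNReal.ofReal_ne_top hmom)
  rw [show (fun ω => net.Z 0 0 (T · ω) (ζ · ω) ^ α) = fun ω => V 0 ω ^ α by rw [← hZV]]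
  exact integrable_rpow_of_lintegral_Ioi_lt_top (hV 0)
    (fun ω => Finset.sum_nonneg fun j _ => hYnonneg _ j ω) (by linarith)
    (lintegral_Ioi_mul_rpow_lt_top_of_tail_le hα1 ht₁ (fun t => prob_le_one) htail hS)

/-- **Necessity of moments** (Theorem 2): in a monotone-separable network satisfying
(IA) and (AA), for any `α > 1`: if `E[Z_{(-∞,0]}^{α-1}] < ∞`
(as `∫ sup_n Z_{[-n,0]}^{α-1}`, a Lebesgue integral in `[0,∞]`), then `E[Z_0^α] < ∞`. -/
theorem necessity_of_moments {K : Type*} [MeasurableSpace K]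
    {Ω : Type*} [MeasurableSpace Ω] {μ : Measure Ω} [IsProbabilityMeasure μ]
    (τ : ℤ → Ω → ℝ) (ζ : ℤ → Ω → K)
    (hτmeas : ∀ n, Measurable (τ n)) (hζmeas : ∀ n, Measurable (ζ n))
    (hτnonneg : ∀ n ω, 0 ≤ τ n ω)
    -- (IA): the two driving sequences are i.i.d. and mutually independent
    (hτiid : iIndepFun τ μ)
    (hτident : ∀ n : ℤ, IdentDistrib (τ n) (τ 0) μ μ)
    (hζiid : iIndepFun ζ μ)
    (hζident : ∀ n : ℤ, IdentDistrib (ζ n) (ζ 0) μ μ)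
    (hindep : IndepFun (fun ω (n : ℤ) => τ n ω) (fun ω (n : ℤ) => ζ n ω) μ)
    (T : ℤ → Ω → ℝ) (hT0 : ∀ ω, T 0 ω = 0)
    (hTrec : ∀ (n : ℤ) ω, T (n + 1) ω = T n ω + τ n ω)
    (net : MonSepNet K)
    (hZmeas : ∀ m n : ℤ,
      Measurable fun ω => net.Z m n (fun l => T l ω) (fun l => ζ l ω))
    (hZQmeas : ∀ m n : ℤ,
      Measurable fun ω => net.Z m n (fun _ => 0) (fun l => ζ l ω))
    (a : ℝ) (ha : 0 < a)
    (hτint : Integrable (τ 0) μ) (hτmean : ∫ ω, τ 0 ω ∂μ = a)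
    (hZ0int : Integrable (fun ω => net.Z 0 0 (fun l => T l ω) (fun l => ζ l ω)) μ)
    -- (AA): `Z_i = Y_i^{(1)} + ⋯ + Y_i^{(r)}` with i.i.d. nonnegative vectors
    -- independent of the interarrival times, and
    -- `Z_{[n,0]}(Q) ≥ max_j Σ_{i=n}^0 Y_i^{(j)}`
    (r : ℕ) (hr : 1 ≤ r) (Y : ℤ → Fin r → Ω → ℝ)
    (hYmeas : ∀ i j, Measurable (Y i j))
    (hYnonneg : ∀ i j ω, 0 ≤ Y i j ω)
    (hZeq : ∀ (i : ℤ) ω, net.Z i i (fun l => T l ω) (fun l => ζ l ω) = ∑ j, Y i j ω)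
    (hYiid : iIndepFun
      (fun i ω (j : Fin r) => Y i j ω) μ)
    (hYident : ∀ i : ℤ, IdentDistrib (fun ω (j : Fin r) => Y i j ω)
      (fun ω (j : Fin r) => Y 0 j ω) μ μ)
    (hYτindep : IndepFun (fun ω (i : ℤ) (j : Fin r) => Y i j ω)
      (fun ω (i : ℤ) => τ i ω) μ)
    (hQlow : ∀ n : ℤ, n ≤ 0 → ∀ᵐ ω ∂μ, ∀ j : Fin r,
      (∑ i ∈ Finset.Icc n 0, Y i j ω) ≤ net.Z n 0 (fun _ => 0) (fun l => ζ l ω))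
    (α : ℝ) (hα : 1 < α)
    -- `E[Z_{(-∞,0]}^{α-1}] < ∞`
    (hmom : (∫⁻ ω, ⨆ n : ℕ, ENNReal.ofReal
      (net.Z (-(n : ℤ)) 0 (fun l => T l ω) (fun l => ζ l ω) ^ (α - 1)) ∂μ) < ⊤) :
    Integrable (fun ω => net.Z 0 0 (fun l => T l ω) (fun l => ζ l ω) ^ α) μ :=
  necessity_of_moments_general τ ζ hτmeas hτnonneg hτident T hTrec net hZmeas a ha hτint hτmean
    hZ0int r hr Y hYmeas hYnonneg hZeq hYiid hYident hYτindep hQlow α hα hmom
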